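/- arXiv:2602.13897 — 2 statements merged into one kernel-verified Lean document; each statement's English description precedes it below -/
import Mathlib

section
/- Let f : [0,1]^m → ℝ≥0 be an MLC function, let f̂ = conv(f), and let x̂ ∈ [0,1]^m. Then there exist k ∈ ℕ, weights λ_1, …, λ_k ≥ 0 with Σ_{i=1}^k λ_i = 1, and points x^(1), …, x^(k) ∈ [0,1]^m such that f(x^(i)) = f̂(x^(i)) for all i ∈ [k], x̂ = Σ_{i=1}^k λ_i x^(i), and f̂(x̂) = Σ_{i=1}^k λ_i f(x^(i)). -/
/-!
`conv(f)(x̂)` is the infimum of `∑ λᵢ f(xᵢ)` over convex combinations `x̂ = ∑ λᵢ xᵢ` of points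
of the cube, and by Carathéodory `m + 2` points suffice. These combinations form a compact set
on which `∑ λᵢ f(xᵢ)` is lower semicontinuous, since `f` is nonnegative and lower semicontinuous,
so the infimum is attained. At a minimiser every point of positive weight satisfies
`f = conv(f)`: otherwise lowering its value inside `conv(epi f)` would lower the infimum.
Points of weight zero are moved onto a point of positive weight.
-/

noncomputable section

/-- The unit cube `[0,1]^m` in `Fin m → ℝ`. -/
def cube (m : ℕ) : Set (Fin m → ℝ) := Set.Icc 0 1

/-- The lower limit of `f` at `x₀` relative to the domain `D` (in the extended reals). -/
def lowerLim {E : Type*} [SeminormedAddCommGroup E] (D : Set E) (f : E → ℝ) (x₀ : E) : EReal :=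
  ⨆ δ : {δ : ℝ // 0 < δ}, ⨅ x : {x : E // x ∈ D ∧ ‖x - x₀‖ ≤ δ.1}, (f x.1 : EReal)

/-- `f` is lower-continuous on `D`. -/
def LowerContOn {E : Type*} [SeminormedAddCommGroup E] (D : Set E) (f : E → ℝ) : Prop :=
  ∀ x₀ ∈ D, lowerLim D f x₀ = (f x₀ : EReal)

/-- The epigraph of `f` relative to the domain `D`. -/
def epigraph {E : Type*} (D : Set E) (f : E → ℝ) : Set (E × ℝ) :=
  {q | q.1 ∈ D ∧ f q.1 ≤ q.2}

/-- The convex hull of a function: `conv(f)(x) = inf {y : (x,y) ∈ conv(epi f)}`. -/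
def funConvHull {E : Type*} [AddCommGroup E] [Module ℝ E] (D : Set E) (f : E → ℝ) : E → ℝ :=
  fun x => sInf {y : ℝ | (x, y) ∈ convexHull ℝ (epigraph D f)}

open Set Topology Module

theorem LowerContOn.lowerSemicontinuousOn {E : Type*} [SeminormedAddCommGroup E] {D : Set E}
    {f : E → ℝ} (hf : LowerContOn D f) : LowerSemicontinuousOn f D := by
  intro x₀ hx₀ c hc
  have hc' : (c : EReal) < lowerLim D f x₀ := by rw [hf x₀ hx₀]; exact_mod_cast hc
  obtain ⟨⟨δ, hδ⟩, hδc⟩ := lt_iSup_iff.1 hc'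
  have hball : {x : E | ‖x - x₀‖ ≤ δ} ∈ 𝓝 x₀ := by
    simpa only [Metric.closedBall, dist_eq_norm] using Metric.closedBall_mem_nhds x₀ hδ
  filter_upwards [nhdsWithin_le_nhds hball, self_mem_nhdsWithin] with x hx hxD
  exact_mod_cast hδc.trans_le (iInf_le _ ⟨x, hxD, hx⟩)

theorem LowerSemicontinuousOn.mul_of_nonneg {α : Type*} [TopologicalSpace α] {f g : α → ℝ}
    {s : Set α} (hf : LowerSemicontinuousOn f s) (hg : LowerSemicontinuousOn g s)
    (hf₀ : ∀ x ∈ s, 0 ≤ f x) (hg₀ : ∀ x ∈ s, 0 ≤ g x) :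
    LowerSemicontinuousOn (fun x => f x * g x) s := by
  intro x hx c hc
  rcases lt_or_ge c 0 with hc₀ | hc₀
  · filter_upwards [self_mem_nhdsWithin] with y hy
    exact hc₀.trans_le (mul_nonneg (hf₀ y hy) (hg₀ y hy))
  have hgx : 0 < g x := pos_of_mul_pos_right (hc₀.trans_lt hc) (hf₀ x hx)
  obtain ⟨a, hca, haf⟩ := exists_between ((div_lt_iff₀ hgx).2 hc)
  have ha : 0 < a := (div_nonneg hc₀ hgx.le).trans_lt hca
  have hcag : c / a < g x := (div_lt_iff₀ ha).2 (by rwa [div_lt_iff₀ hgx, mul_comm] at hca)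
  filter_upwards [hf x hx a haf, hg x hx _ hcag] with y hfy hgy
  have hgy₀ : 0 ≤ g y := (div_nonneg hc₀ ha.le).trans hgy.le
  calc c = a * (c / a) := by field_simp
    _ < a * g y := mul_lt_mul_of_pos_left hgy ha
    _ ≤ f y * g y := mul_le_mul_of_nonneg_right hfy.le hgy₀

theorem Function.extend_mem {κ ι α : Type*} {e : κ → ι} {g : κ → α} {d : ι → α} {S : Set α}
    (hg : ∀ k, g k ∈ S) (hd : ∀ j, d j ∈ S) (j : ι) : Function.extend e g d j ∈ S := by
  classical
  rw [Function.extend_def]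
  split_ifs
  exacts [hg _, hd _]

theorem Function.Injective.sum_extend_of_map_zero {κ ι R α M : Type*} [Fintype κ] [Fintype ι]
    [Zero R] [AddCommMonoid M] {e : κ → ι} (he : e.Injective) (w : κ → R) (z : κ → α)
    (d : ι → α) (F : R → α → M) (hF : ∀ a, F 0 a = 0) :
    ∑ j, F (Function.extend e w 0 j) (Function.extend e z d j) = ∑ k, F (w k) (z k) :=
  (Fintype.sum_of_injective e he _ _
    (fun j hj => by rw [Function.extend_apply' _ _ _ (by simpa using hj)]; exact hF _)
    (fun k => by rw [he.extend_apply, he.extend_apply])).symm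

section ConvexHullEpigraph

variable {E : Type*} [AddCommGroup E] [Module ℝ E] {D : Set E} {f : E → ℝ}

theorem snd_nonneg_of_mem_convexHull_epigraph (hf₀ : ∀ x ∈ D, 0 ≤ f x) {q : E × ℝ}
    (hq : q ∈ convexHull ℝ (epigraph D f)) : 0 ≤ q.2 :=
  (convexHull_min (t := univ ×ˢ Ici 0) (fun q hq => ⟨trivial, (hf₀ q.1 hq.1).trans hq.2⟩)
    (convex_univ.prod (convex_Ici 0)) hq).2

theorem funConvHull_le_of_mem (hf₀ : ∀ x ∈ D, 0 ≤ f x) {x : E} {y : ℝ}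
    (hxy : (x, y) ∈ convexHull ℝ (epigraph D f)) : funConvHull D f x ≤ y :=
  csInf_le ⟨0, fun _ h => snd_nonneg_of_mem_convexHull_epigraph hf₀ h⟩ hxy

theorem funConvHull_le_apply (hf₀ : ∀ x ∈ D, 0 ≤ f x) {x : E} (hx : x ∈ D) :
    funConvHull D f x ≤ f x :=
  funConvHull_le_of_mem hf₀ (subset_convexHull ℝ _ ⟨hx, le_rfl⟩)

theorem sum_mem_convexHull_epigraph {ι : Type*} [Fintype ι] {w : ι → ℝ}
    (hw : w ∈ stdSimplex ℝ ι) {z : ι → E} {y : ι → ℝ}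
    (hzy : ∀ i, (z i, y i) ∈ convexHull ℝ (epigraph D f)) :
    (∑ i, w i • z i, ∑ i, w i * y i) ∈ convexHull ℝ (epigraph D f) := by
  have h := (convex_convexHull ℝ (epigraph D f)).sum_mem (fun i _ => hw.1 i) hw.2
    (fun i _ => hzy i)
  convert h using 1
  ext <;> simp [Prod.fst_sum, Prod.snd_sum]

end ConvexHullEpigraph

section ConvexCombinations

variable {E : Type*} [AddCommGroup E] [Module ℝ E] {ι : Type*} [Fintype ι]

def convexCombRepr (D : Set E) (ι : Type*) [Fintype ι] (x : E) : Set ((ι → ℝ) × (ι → E)) :=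
  (stdSimplex ℝ ι ×ˢ univ.pi fun _ => D) ∩ {p | ∑ i, p.1 i • p.2 i = x}

def combValue (f : E → ℝ) (p : (ι → ℝ) × (ι → E)) : ℝ :=
  ∑ i, p.1 i * f (p.2 i)

variable {D : Set E} {f : E → ℝ} {x : E} {p : (ι → ℝ) × (ι → E)}

theorem convexCombRepr_nonempty [Nonempty ι] (hx : x ∈ D) : (convexCombRepr D ι x).Nonempty := by
  obtain ⟨w, hw⟩ : Nonempty (stdSimplex ℝ ι) := inferInstance
  refine ⟨(w, fun _ => x), ⟨hw, fun _ _ => hx⟩, ?_⟩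
  simp only [mem_ofPred_eq, ← Finset.sum_smul, hw.2, one_smul]

theorem funConvHull_le_combValue (hf₀ : ∀ x ∈ D, 0 ≤ f x) (hp : p ∈ convexCombRepr D ι x) :
    funConvHull D f x ≤ combValue f p := by
  refine funConvHull_le_of_mem hf₀ ?_
  rw [← hp.2]
  exact sum_mem_convexHull_epigraph hp.1.1 fun i => subset_convexHull ℝ _ ⟨hp.1.2 i trivial, le_rfl⟩

/-- Otherwise lowering the value at `p.2 i` inside the hull would push the combination below
`funConvHull D f x`. -/
theorem apply_eq_funConvHull_of_eq_combValue (hf₀ : ∀ x ∈ D, 0 ≤ f x)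
    (hp : p ∈ convexCombRepr D ι x) (hval : funConvHull D f x = combValue f p) {i : ι}
    (hi : p.1 i ≠ 0) : f (p.2 i) = funConvHull D f (p.2 i) := by
  classical
  have hiD : p.2 i ∈ D := hp.1.2 i trivial
  refine le_antisymm ?_ (funConvHull_le_apply hf₀ hiD)
  by_contra! hlt
  obtain ⟨y, hyH, hyf⟩ :=
    exists_lt_of_csInf_lt (s := {y | (p.2 i, y) ∈ convexHull ℝ (epigraph D f)})
      ⟨f _, subset_convexHull ℝ _ ⟨hiD, le_rfl⟩⟩ hlt
  let y' : ι → ℝ := fun j => if j = i then y else f (p.2 j)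
  have hmem : ∀ j, (p.2 j, y' j) ∈ convexHull ℝ (epigraph D f) := fun j => by
    by_cases hj : j = i
    · subst hj; simpa [y'] using hyH
    · simpa [y', hj] using subset_convexHull ℝ (epigraph D f) ⟨hp.1.2 j trivial, le_rfl⟩
  have hle := funConvHull_le_of_mem hf₀ (sum_mem_convexHull_epigraph hp.1.1 hmem)
  rw [hp.2, hval] at hle
  have hlt' : ∑ j, p.1 j * y' j < combValue f p := by
    refine Finset.sum_lt_sum (fun j _ => mul_le_mul_of_nonneg_left ?_ (hp.1.1.1 j))
      ⟨i, Finset.mem_univ i, ?_⟩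
    · by_cases hj : j = i
      · subst hj; simpa [y'] using hyf.le
      · simp [y', hj]
    · simpa [y'] using mul_lt_mul_of_pos_left hyf ((hp.1.1.1 i).lt_of_ne' hi)
  exact hle.not_gt hlt'

theorem exists_mem_convexCombRepr_forall_mem (hp : p ∈ convexCombRepr D ι x) {T : Set E}
    (hT : ∀ i, p.1 i ≠ 0 → p.2 i ∈ T) :
    ∃ q ∈ convexCombRepr D ι x, combValue f q = combValue f p ∧ ∀ i, q.2 i ∈ T := by
  classical
  obtain ⟨i₀, hi₀⟩ : ∃ i, p.1 i ≠ 0 := by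
    by_contra! h
    simpa [h] using hp.1.1.2
  let q : (ι → ℝ) × (ι → E) := (p.1, fun i => if p.1 i = 0 then p.2 i₀ else p.2 i)
  have hsum : ∑ i, q.1 i • q.2 i = x := by
    rw [← hp.2]
    exact Finset.sum_congr rfl fun i _ => by by_cases hi : p.1 i = 0 <;> simp [q, hi]
  have hval : combValue f q = combValue f p :=
    Finset.sum_congr rfl fun i _ => by by_cases hi : p.1 i = 0 <;> simp [q, hi]
  refine ⟨q, ⟨⟨hp.1.1, fun i _ => ?_⟩, hsum⟩, hval, fun i => ?_⟩
  · dsimp only [q]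
    split_ifs with hi
    exacts [hp.1.2 i₀ trivial, hp.1.2 i trivial]
  · dsimp only [q]
    split_ifs with hi
    exacts [hT i₀ hi₀, hT i hi]

end ConvexCombinations

section Caratheodory

variable {E : Type*} [AddCommGroup E] [Module ℝ E] [FiniteDimensional ℝ E] {D : Set E}
  {f : E → ℝ} {x : E}

theorem exists_combValue_le_of_mem_convexHull_epigraph {y : ℝ}
    (hxy : (x, y) ∈ convexHull ℝ (epigraph D f)) :
    ∃ p ∈ convexCombRepr D (Fin (finrank ℝ E + 2)) x, combValue f p ≤ y := by
  obtain ⟨κ, _, z, w, hzD, hai, hw₀, hw₁, hzw⟩ := eq_pos_convex_span_of_mem_convexHull hxy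
  have hcard : Fintype.card κ ≤ finrank ℝ E + 2 := by
    have := hai.card_le_finrank_succ.trans (Nat.succ_le_succ (Submodule.finrank_le _))
    simpa [Module.finrank_prod] using this
  obtain ⟨e⟩ := Function.Embedding.nonempty_of_card_le (β := Fin (finrank ℝ E + 2))
    (by simpa using hcard)
  obtain ⟨k₀⟩ : Nonempty κ := by
    by_contra h
    simp [not_nonempty_iff.1 h] at hw₁
  have hepi : ∀ k, z k ∈ epigraph D f := fun k => hzD (mem_range_self k)
  let xs : κ → E := fun k => (z k).1
  let pad : Fin (finrank ℝ E + 2) → E := fun _ => xs k₀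
  refine ⟨(Function.extend e w 0, Function.extend e xs pad), ⟨⟨⟨?_, ?_⟩, fun j _ => ?_⟩, ?_⟩, ?_⟩
  · exact Function.extend_mem (g := w) (d := 0) (S := Ici 0) (fun k => (hw₀ k).le)
      fun _ => self_mem_Ici
  · simpa [hw₁] using e.injective.sum_extend_of_map_zero w xs pad (fun a _ => a) fun _ => rfl
  · exact Function.extend_mem (fun k => (hepi k).1) (fun _ => (hepi k₀).1) j
  · have hfst := congrArg Prod.fst hzw
    simp only [Prod.fst_sum, Prod.smul_fst] at hfst
    exact (e.injective.sum_extend_of_map_zero w xs pad (· • ·) (zero_smul ℝ)).trans hfst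
  · have hsnd := congrArg Prod.snd hzw
    simp only [Prod.snd_sum, Prod.smul_snd, smul_eq_mul] at hsnd
    rw [combValue, e.injective.sum_extend_of_map_zero w xs pad (fun a v => a * f v)
      fun _ => zero_mul _, ← hsnd]
    exact Finset.sum_le_sum fun k _ => mul_le_mul_of_nonneg_left (hepi k).2 (hw₀ k).le

end Caratheodory

section Minimization

variable {E : Type*} [NormedAddCommGroup E] [NormedSpace ℝ E] {D : Set E} {f : E → ℝ} {x : E}
  {ι : Type*} [Fintype ι]

theorem isCompact_convexCombRepr (hD : IsCompact D) : IsCompact (convexCombRepr D ι x) :=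
  ((isCompact_stdSimplex ℝ ι).prod (isCompact_univ_pi fun _ => hD)).inter_right
    (isClosed_eq (by fun_prop) continuous_const)

theorem lowerSemicontinuousOn_combValue (hf₀ : ∀ x ∈ D, 0 ≤ f x)
    (hf : LowerSemicontinuousOn f D) :
    LowerSemicontinuousOn (combValue f) (convexCombRepr D ι x) := by
  refine lowerSemicontinuousOn_sum fun i _ => ?_
  have hmaps : MapsTo (fun p : (ι → ℝ) × (ι → E) => p.2 i) (convexCombRepr D ι x) D :=
    fun p hp => hp.1.2 i trivial
  have hweight : Continuous fun p : (ι → ℝ) × (ι → E) => p.1 i := by fun_prop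
  have hpoint : Continuous fun p : (ι → ℝ) × (ι → E) => p.2 i := by fun_prop
  exact (hweight.lowerSemicontinuous.lowerSemicontinuousOn _).mul_of_nonneg
    (hf.comp hpoint.continuousOn hmaps) (fun p hp => hp.1.1.1 i) fun p hp => hf₀ _ (hmaps hp)

variable [FiniteDimensional ℝ E]

/-- By Carathéodory the infimum may be taken over the compact set of combinations of
`finrank ℝ E + 2` points, on which `combValue f` is lower semicontinuous. -/
theorem exists_mem_convexCombRepr_funConvHull_eq (hD : IsCompact D) (hf₀ : ∀ x ∈ D, 0 ≤ f x)
    (hf : LowerSemicontinuousOn f D) (hx : x ∈ D) :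
    ∃ p ∈ convexCombRepr D (Fin (finrank ℝ E + 2)) x, funConvHull D f x = combValue f p := by
  obtain ⟨p, hp, hmin⟩ := (lowerSemicontinuousOn_combValue hf₀ hf).exists_isMinOn
    (convexCombRepr_nonempty (ι := Fin (finrank ℝ E + 2)) hx) (isCompact_convexCombRepr hD)
  refine ⟨p, hp, le_antisymm (funConvHull_le_combValue hf₀ hp) ?_⟩
  refine le_csInf ⟨f x, subset_convexHull ℝ _ ⟨hx, le_rfl⟩⟩ fun y hy => ?_
  obtain ⟨q, hq, hqy⟩ := exists_combValue_le_of_mem_convexHull_epigraph hy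
  exact (hmin hq).trans hqy

end Minimization

theorem stmt3_general (m : ℕ) (f : (Fin m → ℝ) → ℝ) (hf_nonneg : ∀ x ∈ cube m, 0 ≤ f x)
    (hf_lc : LowerContOn (cube m) f)
    (xhat : Fin m → ℝ) (hxhat : xhat ∈ cube m) :
    ∃ (k : ℕ) (lam : Fin k → ℝ) (xs : Fin k → (Fin m → ℝ)),
      (∀ i, 0 ≤ lam i) ∧ (∑ i, lam i = 1) ∧
      (∀ i, xs i ∈ cube m) ∧
      (∀ i, f (xs i) = funConvHull (cube m) f (xs i)) ∧
      xhat = ∑ i, lam i • xs i ∧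
      funConvHull (cube m) f xhat = ∑ i, lam i * f (xs i) := by
  obtain ⟨p, hp, hval⟩ := exists_mem_convexCombRepr_funConvHull_eq isCompact_Icc hf_nonneg
    hf_lc.lowerSemicontinuousOn hxhat
  obtain ⟨q, hq, hqp, hqT⟩ := exists_mem_convexCombRepr_forall_mem (f := f) hp
    (T := {y | f y = funConvHull (cube m) f y})
    fun i hi => apply_eq_funConvHull_of_eq_combValue hf_nonneg hp hval hi
  exact ⟨_, q.1, q.2, hq.1.1.1, hq.1.1.2, fun i => hq.1.2 i trivial, hqT, hq.2.symm,
    hval.trans hqp.symm⟩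

/-- If `f : [0,1]^m → ℝ≥0` is MLC with convex hull `f̂` and
`x̂ ∈ [0,1]^m`, then `x̂` is a convex combination of points where `f` and `f̂`
agree, and `f̂ x̂` is the corresponding convex combination of the values of `f`. -/
theorem stmt3 (m : ℕ) (f : (Fin m → ℝ) → ℝ) (hf_nonneg : ∀ x ∈ cube m, 0 ≤ f x)
    (hf_mono : MonotoneOn f (cube m)) (hf_lc : LowerContOn (cube m) f)
    (xhat : Fin m → ℝ) (hxhat : xhat ∈ cube m) :
    ∃ (k : ℕ) (lam : Fin k → ℝ) (xs : Fin k → (Fin m → ℝ)),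
      (∀ i, 0 ≤ lam i) ∧ (∑ i, lam i = 1) ∧
      (∀ i, xs i ∈ cube m) ∧
      (∀ i, f (xs i) = funConvHull (cube m) f (xs i)) ∧
      xhat = ∑ i, lam i • xs i ∧
      funConvHull (cube m) f xhat = ∑ i, lam i * f (xs i) :=
  stmt3_general m f hf_nonneg hf_lc xhat hxhat

end
end

section
/- Let v : [0,1]^m → ℝ≥0 be a linear valuation function, i.e., v(x) = Σ_{j=1}^m v_j x_j with v_j ≥ 0, and let b ∈ ℝ≥0 ∪ {∞} be a budget. Let p : [0,1]^m → ℝ≥0 be an MLC pricing function and let p̂ = conv(p). Then r(p̂|v,b) ≥ r(p|v,b). -/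
noncomputable section

/-- The affordable set `F(p|b)`; the budget `b` lives in the extended reals
(`b = ⊤` means an infinite budget). -/
def afford {E : Type*} (D : Set E) (p : E → ℝ) (b : EReal) : Set E :=
  {x ∈ D | (p x : EReal) ≤ b}

/-- The maximum net utility `u*(p|v,b)`. -/
def uStar {E : Type*} (D : Set E) (p v : E → ℝ) (b : EReal) : ℝ :=
  ⨆ x : afford D p b, (v x.1 - p x.1)

/-- The demand set `Dem(p|v,b)`. -/
def demand {E : Type*} (D : Set E) (p v : E → ℝ) (b : EReal) : Set E :=
  {x ∈ afford D p b | v x - p x = uStar D p v b}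

/-- The revenue `r(p|v,b)`. -/
def revenue {E : Type*} (D : Set E) (p v : E → ℝ) (b : EReal) : ℝ :=
  ⨆ x : demand D p v b, p x.1

/-!
The lower envelope `p̂ = conv p` of a bounded, lower semicontinuous price `p` on a compact convex
set is attained: `(x, p̂ x)` lies in the convex hull of the epigraph of `p` truncated at `sup p`,
and that hull is compact. Maximising the linear functional `(x, y) ↦ v x - y` on it under the
budget produces a `p̂`-demanded bundle, and, the functional being linear, some point `(z, p z)` of
the epigraph does at least as well, so `u*(p̂) ≤ v z - p z`. If `z` is affordable under `p`, then
`u*(p̂) ≤ u*(p)` and every `p`-demanded bundle is `p̂`-demanded at the same price. Otherwise the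
budget binds: walking from the `p̂`-demanded bundle towards `z` inside the hull of the epigraph
reaches a `p̂`-demanded bundle priced exactly at the budget, which bounds every price paid
under `p`.
-/

open Set Filter Topology Module

theorem isCompact_convexHull {E : Type*} [NormedAddCommGroup E] [NormedSpace ℝ E]
    [FiniteDimensional ℝ E] {K : Set E} (hK : IsCompact K) : IsCompact (convexHull ℝ K) := by
  classical
  rcases K.eq_empty_or_nonempty with rfl | ⟨x₀, hx₀⟩
  · simp
  set n := finrank ℝ E + 1
  let Φ : (Fin n → ℝ) × (Fin n → E) → E := fun q => ∑ i, q.1 i • q.2 i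
  -- Carathéodory: `finrank ℝ E + 1` points of `K` suffice for every point of the hull.
  suffices convexHull ℝ K = Φ '' (stdSimplex ℝ (Fin n) ×ˢ univ.pi fun _ => K) from
    this ▸ ((isCompact_stdSimplex ℝ _).prod (isCompact_univ_pi fun _ => hK)).image (by fun_prop)
  refine Subset.antisymm (fun x hx => ?_) ?_
  · obtain ⟨ι, _, z, w, hzK, hz, hw0, hw1, rfl⟩ := eq_pos_convex_span_of_mem_convexHull hx
    have hcard : Fintype.card ι ≤ Fintype.card (Fin n) := by
      simpa [n] using
        hz.card_le_finrank_succ.trans (Nat.add_le_add_right (Submodule.finrank_le _) 1)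
    obtain ⟨e⟩ := Function.Embedding.nonempty_of_card_le hcard
    set w' : Fin n → ℝ := Function.extend e w 0
    set z' : Fin n → E := Function.extend e z fun _ => x₀
    have hw'_out : ∀ j ∉ range e, w' j = 0 := fun j hj =>
      Function.extend_apply' _ _ _ fun ⟨i, hi⟩ => hj ⟨i, hi⟩
    have hz'_out : ∀ j ∉ range e, z' j = x₀ := fun j hj =>
      Function.extend_apply' _ _ _ fun ⟨i, hi⟩ => hj ⟨i, hi⟩
    have hw'_e (i : ι) : w' (e i) = w i := e.injective.extend_apply _ _ _
    have hz'_e (i : ι) : z' (e i) = z i := e.injective.extend_apply _ _ _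
    have hw'_nonneg (j : Fin n) : 0 ≤ w' j := by
      by_cases hj : j ∈ range e
      · obtain ⟨i, rfl⟩ := hj
        exact hw'_e i ▸ (hw0 i).le
      · exact (hw'_out j hj).ge
    have hz'_mem (j : Fin n) : z' j ∈ K := by
      by_cases hj : j ∈ range e
      · obtain ⟨i, rfl⟩ := hj
        exact hz'_e i ▸ hzK ⟨i, rfl⟩
      · exact hz'_out j hj ▸ hx₀
    refine ⟨(w', z'), ⟨⟨hw'_nonneg, ?_⟩, fun j _ => hz'_mem j⟩, ?_⟩
    · rw [← hw1]
      exact (Fintype.sum_of_injective e e.injective _ _ hw'_out fun i => (hw'_e i).symm).symm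
    · refine (Fintype.sum_of_injective e e.injective _ _ (fun j hj => ?_) fun i => ?_).symm
      · simp [hw'_out j hj]
      · simp [hw'_e, hz'_e]
  · rintro _ ⟨⟨w, z⟩, ⟨hw, hz⟩, rfl⟩
    exact (convex_convexHull ℝ K).sum_mem (fun i _ => hw.1 i) hw.2
      fun i _ => subset_convexHull ℝ K (hz i trivial)

theorem LowerContOn.isClosed_epigraph {E : Type*} [SeminormedAddCommGroup E] {D : Set E}
    {f : E → ℝ} (hD : IsClosed D) (hf : LowerContOn D f) : IsClosed (epigraph D f) := by
  refine IsSeqClosed.isClosed fun q Q hq hQ => ?_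
  have h₁ : Tendsto (fun n => (q n).1) atTop (𝓝 Q.1) := hQ.fst_nhds
  have h₂ : Tendsto (fun n => (q n).2) atTop (𝓝 Q.2) := hQ.snd_nhds
  have hQD : Q.1 ∈ D := hD.mem_of_tendsto h₁ (Eventually.of_forall fun n => (hq n).1)
  refine ⟨hQD, EReal.coe_le_coe_iff.1 ?_⟩
  rw [← hf Q.1 hQD]
  refine iSup_le fun δ => ge_of_tendsto (EReal.tendsto_coe.2 h₂) ?_
  filter_upwards [(tendsto_iff_norm_sub_tendsto_zero.1 h₁).eventually_le_const δ.2] with n hn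
  exact (iInf_le _ ⟨(q n).1, (hq n).1, hn⟩).trans (EReal.coe_le_coe_iff.2 (hq n).2)

section FunConvHull

variable {E : Type*} [AddCommGroup E] [Module ℝ E] {D : Set E} {p : E → ℝ}

theorem convexHull_epigraph_subset (hp : ∀ x ∈ D, 0 ≤ p x) :
    convexHull ℝ (epigraph D p) ⊆ convexHull ℝ D ×ˢ Ici 0 :=
  convexHull_min (fun _ hq => ⟨subset_convexHull ℝ D hq.1, (hp _ hq.1).trans hq.2⟩)
    ((convex_convexHull ℝ D).prod (convex_Ici 0))

theorem funConvHull_le (hp : ∀ x ∈ D, 0 ≤ p x) {x : E} {y : ℝ}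
    (h : (x, y) ∈ convexHull ℝ (epigraph D p)) : funConvHull D p x ≤ y :=
  csInf_le ⟨0, fun _ hy => (convexHull_epigraph_subset hp hy).2⟩ h

theorem funConvHull_le_self (hp : ∀ x ∈ D, 0 ≤ p x) {x : E} (hx : x ∈ D) :
    funConvHull D p x ≤ p x :=
  funConvHull_le hp (subset_convexHull ℝ _ ⟨hx, le_rfl⟩)

theorem funConvHull_nonneg (hp : ∀ x ∈ D, 0 ≤ p x) (x : E) : 0 ≤ funConvHull D p x :=
  Real.sInf_nonneg fun _ hy => (convexHull_epigraph_subset hp hy).2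

def truncEpigraph (D : Set E) (p : E → ℝ) (P : ℝ) : Set (E × ℝ) :=
  epigraph D p ∩ {q | q.2 ≤ P}

theorem exists_le_mem_convexHull_truncEpigraph {P : ℝ} (hP : ∀ x ∈ D, p x ≤ P) {x : E} {y : ℝ}
    (h : (x, y) ∈ convexHull ℝ (epigraph D p)) :
    ∃ y' ≤ y, (x, y') ∈ convexHull ℝ (truncEpigraph D p P) := by
  set C := convexHull ℝ (truncEpigraph D p P)
  have hconv : Convex ℝ {q : E × ℝ | ∃ y' ≤ q.2, (q.1, y') ∈ C} := by
    rintro ⟨x₁, y₁⟩ ⟨y₁', hy₁, h₁⟩ ⟨x₂, y₂⟩ ⟨y₂', hy₂, h₂⟩ a c ha hc hac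
    refine ⟨a * y₁' + c * y₂', ?_, by simpa using convex_convexHull ℝ _ h₁ h₂ ha hc hac⟩
    simp only [Prod.snd_add, Prod.smul_snd, smul_eq_mul]
    gcongr
  refine convexHull_min (fun q hq => ?_) hconv h
  exact ⟨min q.2 P, min_le_left _ _,
    subset_convexHull ℝ _ ⟨⟨hq.1, le_min hq.2 (hP _ hq.1)⟩, min_le_right q.2 P⟩⟩

end FunConvHull

section Market

variable {E : Type*} {D : Set E} {p v : E → ℝ} {b : EReal} {x : E}

theorem le_uStar (hv : BddAbove (v '' D)) (hp : ∀ x ∈ D, 0 ≤ p x) (hx : x ∈ afford D p b) :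
    v x - p x ≤ uStar D p v b := by
  obtain ⟨C, hC⟩ := hv
  refine le_ciSup (f := fun y : afford D p b => v y - p y) ⟨C, ?_⟩ ⟨x, hx⟩
  rintro _ ⟨y, rfl⟩
  linarith [hC (mem_image_of_mem v y.2.1), hp y y.2.1]

theorem uStar_le (hne : (afford D p b).Nonempty) {c : ℝ} (h : ∀ x ∈ afford D p b, v x - p x ≤ c) :
    uStar D p v b ≤ c :=
  have := hne.to_subtype
  ciSup_le fun x => h x x.2

theorem mem_demand_of_uStar_le (hv : BddAbove (v '' D)) (hp : ∀ x ∈ D, 0 ≤ p x)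
    (hx : x ∈ afford D p b) (h : uStar D p v b ≤ v x - p x) : x ∈ demand D p v b :=
  ⟨hx, le_antisymm (le_uStar hv hp hx) h⟩

theorem mem_demand_of_le_of_uStar_le {q : E → ℝ} (hv : BddAbove (v '' D))
    (hq : ∀ x ∈ D, 0 ≤ q x) (hqp : ∀ x ∈ D, q x ≤ p x) (hu : uStar D q v b ≤ uStar D p v b)
    (hx : x ∈ demand D p v b) : x ∈ demand D q v b ∧ q x = p x := by
  obtain ⟨⟨hxD, hxb⟩, hxu⟩ := hx
  have hx' : x ∈ afford D q b := ⟨hxD, (EReal.coe_le_coe_iff.2 (hqp x hxD)).trans hxb⟩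
  have := le_uStar hv hq hx'
  have hqx : q x = p x := by linarith [hqp x hxD]
  exact ⟨⟨hx', by linarith⟩, hqx⟩

theorem le_revenue (hp : BddAbove (p '' D)) (hx : x ∈ demand D p v b) :
    p x ≤ revenue D p v b :=
  le_ciSup (f := fun y : demand D p v b => p y)
    (hp.mono (by rintro _ ⟨y, rfl⟩; exact mem_image_of_mem p y.2.1.1)) ⟨x, hx⟩

theorem revenue_nonneg (hp : ∀ x ∈ D, 0 ≤ p x) : 0 ≤ revenue D p v b :=
  Real.iSup_nonneg fun x => hp x x.2.1.1

theorem revenue_le {c : ℝ} (hc : 0 ≤ c) (h : ∀ x ∈ demand D p v b, p x ≤ c) :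
    revenue D p v b ≤ c :=
  Real.iSup_le (fun x => h x x.2) hc

end Market

theorem exists_mem_demand_funConvHull_eq_budget {E : Type*} [AddCommGroup E] [Module ℝ E]
    {D : Set E} {p : E → ℝ} {b : EReal} (hD : Convex ℝ D) (hp : ∀ x ∈ D, 0 ≤ p x)
    (v : E →ₗ[ℝ] ℝ) (hv : BddAbove (v '' D)) {x z : E}
    (hx : x ∈ demand D (funConvHull D p) v b)
    (hxC : (x, funConvHull D p x) ∈ convexHull ℝ (epigraph D p)) (hz : z ∈ D)
    (hzu : uStar D (funConvHull D p) v b ≤ v z - p z) (hzb : b < p z) :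
    ∃ w ∈ demand D (funConvHull D p) v b, (funConvHull D p w : EReal) = b := by
  set ph := funConvHull D p
  set u := uStar D ph v b
  obtain ⟨⟨hxD, hxb⟩, hxu⟩ := hx
  lift b to ℝ using ⟨(hzb.trans (EReal.coe_lt_top _)).ne, ((EReal.bot_lt_coe _).trans_le hxb).ne'⟩
  norm_cast at hxb hzb
  -- `w` is where the segment from `(x, p̂ x)` to `(z, p z)` crosses the budget line.
  set s := (b - ph x) / (p z - ph x)
  have hs0 : 0 ≤ s := div_nonneg (by linarith) (by linarith)
  have hs1 : 0 ≤ 1 - s := sub_nonneg.2 ((div_le_one (by linarith)).2 (by linarith))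
  have hsb : (1 - s) * ph x + s * p z = b := by
    linear_combination div_mul_cancel₀ (b - ph x) (sub_pos.2 (hxb.trans_lt hzb)).ne'
  set w := (1 - s) • x + s • z
  have hwC : (w, (b : ℝ)) ∈ convexHull ℝ (epigraph D p) := by
    convert convex_convexHull ℝ _ hxC
      (subset_convexHull ℝ _ (show (z, p z) ∈ epigraph D p from ⟨hz, le_rfl⟩)) hs1 hs0
      (sub_add_cancel 1 s) using 1
    ext <;> simp [w, hsb]
  have hw : w ∈ afford D ph b :=
    ⟨hD hxD hz hs1 hs0 (sub_add_cancel 1 s), EReal.coe_le_coe_iff.2 (funConvHull_le hp hwC)⟩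
  have hu : u ≤ v w - b :=
    calc u = (1 - s) * u + s * u := by ring
      _ ≤ (1 - s) * (v x - ph x) + s * (v z - p z) := by rw [hxu]; gcongr
      _ = v w - b := by rw [← hsb]; simp only [w, map_add, map_smul, smul_eq_mul]; ring
  have hwu := le_uStar hv (fun y _ => funConvHull_nonneg hp y) hw
  have hwb : ph w = b := le_antisymm (funConvHull_le hp hwC) (by linarith)
  exact ⟨w, ⟨hw, le_antisymm hwu (by linarith)⟩, congrArg _ hwb⟩

section Hull

variable {E : Type*} [NormedAddCommGroup E] [NormedSpace ℝ E] [FiniteDimensional ℝ E]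
  {D : Set E} {p : E → ℝ} {b : EReal}

theorem isCompact_convexHull_truncEpigraph (hD : IsCompact D) (hp_closed : IsClosed (epigraph D p))
    (hp : ∀ x ∈ D, 0 ≤ p x) (P : ℝ) : IsCompact (convexHull ℝ (truncEpigraph D p P)) :=
  isCompact_convexHull <| (hD.prod (isCompact_Icc (a := 0) (b := P))).of_isClosed_subset
    (hp_closed.inter (isClosed_le continuous_snd continuous_const))
    fun _ hq => ⟨hq.1.1, (hp _ hq.1.1).trans hq.1.2, hq.2⟩

theorem funConvHull_mem_convexHull_truncEpigraph (hD : IsCompact D)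
    (hp_closed : IsClosed (epigraph D p)) (hp : ∀ x ∈ D, 0 ≤ p x) {P : ℝ} (hP : ∀ x ∈ D, p x ≤ P)
    {x : E} (hx : x ∈ D) : (x, funConvHull D p x) ∈ convexHull ℝ (truncEpigraph D p P) := by
  set C := convexHull ℝ (truncEpigraph D p P)
  have hCsub : C ⊆ convexHull ℝ (epigraph D p) := convexHull_mono inter_subset_left
  have hpx : (x, p x) ∈ C := subset_convexHull ℝ _ ⟨⟨hx, le_rfl⟩, hP x hx⟩
  set T := {y | (x, y) ∈ C}
  have hT_bdd : BddBelow T := ⟨0, fun y hy => (convexHull_epigraph_subset hp (hCsub hy)).2⟩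
  have hT : sInf T ∈ T :=
    ((isCompact_convexHull_truncEpigraph hD hp_closed hp P).isClosed.preimage
      (Continuous.prodMk_right x)).csInf_mem ⟨p x, hpx⟩ hT_bdd
  suffices funConvHull D p x = sInf T from this ▸ hT
  refine le_antisymm (funConvHull_le hp (hCsub hT))
    (le_csInf ⟨p x, subset_convexHull ℝ _ ⟨hx, le_rfl⟩⟩ fun y hy => ?_)
  obtain ⟨y', hy', hy'C⟩ := exists_le_mem_convexHull_truncEpigraph hP hy
  exact (csInf_le hT_bdd hy'C).trans hy'

theorem exists_mem_demand_funConvHull (hD : IsCompact D) (hD_conv : Convex ℝ D)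
    (hp_closed : IsClosed (epigraph D p)) (hp : ∀ x ∈ D, 0 ≤ p x) {P : ℝ} (hP : ∀ x ∈ D, p x ≤ P)
    (v : E →ₗ[ℝ] ℝ) (hne : (afford D p b).Nonempty) :
    ∃ x ∈ demand D (funConvHull D p) v b, ∃ z ∈ D, uStar D (funConvHull D p) v b ≤ v z - p z := by
  set ph := funConvHull D p
  set C := convexHull ℝ (truncEpigraph D p P)
  have hCsub : C ⊆ D ×ˢ Ici 0 :=
    hD_conv.convexHull_eq ▸
      (convexHull_mono inter_subset_left).trans (convexHull_epigraph_subset hp)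
  let G : E × ℝ →ₗ[ℝ] ℝ := v.comp (LinearMap.fst ℝ E ℝ) - LinearMap.snd ℝ E ℝ
  have hCb : IsCompact (C ∩ {q | (q.2 : EReal) ≤ b}) :=
    (isCompact_convexHull_truncEpigraph hD hp_closed hp P).inter_right
      (isClosed_le (continuous_coe_real_ereal.comp continuous_snd) continuous_const)
  obtain ⟨x₀, hx₀D, hx₀b⟩ := hne
  obtain ⟨⟨x, y⟩, ⟨hxyC, hyb⟩, hmax⟩ := hCb.exists_isMaxOn
    ⟨(x₀, p x₀), subset_convexHull ℝ _ ⟨⟨hx₀D, le_rfl⟩, hP x₀ hx₀D⟩, hx₀b⟩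
    G.continuous_of_finiteDimensional.continuousOn
  have hv : BddAbove (v '' D) := hD.bddAbove_image v.continuous_of_finiteDimensional.continuousOn
  have hxy : ph x ≤ y := funConvHull_le hp (convexHull_mono inter_subset_left hxyC)
  have hx : x ∈ afford D ph b := ⟨(hCsub hxyC).1, (EReal.coe_le_coe_iff.2 hxy).trans hyb⟩
  have hu : uStar D ph v b ≤ v x - y := uStar_le ⟨x, hx⟩ fun x' hx' =>
    hmax ⟨funConvHull_mem_convexHull_truncEpigraph hD hp_closed hp hP hx'.1, hx'.2⟩
  -- Maximum principle for the linear `G` on the hull of `truncEpigraph`.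
  obtain ⟨⟨z, c⟩, ⟨⟨hzD, hzc⟩, -⟩, hG⟩ :=
    (G.convexOn (convex_convexHull ℝ _)).exists_ge_of_mem_convexHull (subset_convexHull ℝ _) hxyC
  have hGz : v x - y ≤ v z - c := hG
  exact ⟨x, mem_demand_of_uStar_le hv (fun y _ => funConvHull_nonneg hp y) hx
    (hu.trans (by linarith)), z, hzD, hu.trans (hGz.trans (by linarith))⟩

theorem revenue_le_revenue_funConvHull (hD : IsCompact D) (hD_conv : Convex ℝ D)
    (hp_closed : IsClosed (epigraph D p)) (hp : ∀ x ∈ D, 0 ≤ p x) (hp_bdd : BddAbove (p '' D))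
    (v : E →ₗ[ℝ] ℝ) (hne : (afford D p b).Nonempty) :
    revenue D p v b ≤ revenue D (funConvHull D p) v b := by
  set ph := funConvHull D p
  obtain ⟨P, hP⟩ := hp_bdd
  have hP' : ∀ x ∈ D, p x ≤ P := fun x hx => hP (mem_image_of_mem p hx)
  have hv : BddAbove (v '' D) := hD.bddAbove_image v.continuous_of_finiteDimensional.continuousOn
  have hph : ∀ x ∈ D, 0 ≤ ph x := fun x _ => funConvHull_nonneg hp x
  have hph_bdd : BddAbove (ph '' D) :=
    ⟨P, forall_mem_image.2 fun x hx => (funConvHull_le_self hp hx).trans (hP' x hx)⟩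
  obtain ⟨x, hx, z, hzD, hzu⟩ := exists_mem_demand_funConvHull hD hD_conv hp_closed hp hP' v hne
  refine revenue_le (revenue_nonneg hph) fun x' hx' => ?_
  by_cases hzb : (p z : EReal) ≤ b
  · have hu : uStar D ph v b ≤ uStar D p v b := hzu.trans (le_uStar hv hp ⟨hzD, hzb⟩)
    obtain ⟨hx'', hpx'⟩ :=
      mem_demand_of_le_of_uStar_le hv hph (fun y hy => funConvHull_le_self hp hy) hu hx'
    exact hpx' ▸ le_revenue hph_bdd hx''
  · have hxC := convexHull_mono inter_subset_left
      (funConvHull_mem_convexHull_truncEpigraph hD hp_closed hp hP' hx.1.1)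
    obtain ⟨w, hw, hwb⟩ :=
      exists_mem_demand_funConvHull_eq_budget hD_conv hp v hv hx hxC hzD hzu (not_le.1 hzb)
    exact (EReal.coe_le_coe_iff.1 (hwb ▸ hx'.1.2)).trans (le_revenue hph_bdd hw)

end Hull

theorem stmt5_general (m : ℕ) (vcoef : Fin m → ℝ) (b : EReal) (hb : 0 ≤ b)
    (p : (Fin m → ℝ) → ℝ) (hp_nonneg : ∀ x ∈ cube m, 0 ≤ p x) (hp0 : p 0 = 0)
    (hp_mono : MonotoneOn p (cube m)) (hp_lc : LowerContOn (cube m) p) :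
    revenue (cube m) (funConvHull (cube m) p) (fun x => ∑ j, vcoef j * x j) b ≥
      revenue (cube m) p (fun x => ∑ j, vcoef j * x j) b := by
  let v : (Fin m → ℝ) →ₗ[ℝ] ℝ := ∑ j, vcoef j • LinearMap.proj j
  have hv : (fun x => ∑ j, vcoef j * x j) = ⇑v := by
    ext x
    simp [v]
  have h0 : (0 : Fin m → ℝ) ∈ cube m := ⟨le_rfl, zero_le_one⟩
  have h1 : (1 : Fin m → ℝ) ∈ cube m := ⟨zero_le_one, le_rfl⟩
  rw [hv, ge_iff_le]
  refine revenue_le_revenue_funConvHull isCompact_Icc (convex_Icc 0 1)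
    (hp_lc.isClosed_epigraph isClosed_Icc) hp_nonneg ⟨p 1, ?_⟩ v ⟨0, h0, by simpa [hp0] using hb⟩
  rintro _ ⟨x, hx, rfl⟩
  exact hp_mono hx h1 hx.2

/-- For a linear valuation `v x = ∑ j, vcoef j * x j` with nonnegative
coefficients, a budget `b ∈ ℝ≥0 ∪ {∞}`, and an MLC pricing function `p` on `[0,1]^m`
with convex hull `p̂ = conv p`, we have `r(p̂|v,b) ≥ r(p|v,b)`. -/
theorem stmt5 (m : ℕ) (vcoef : Fin m → ℝ) (hv : ∀ j, 0 ≤ vcoef j) (b : EReal) (hb : 0 ≤ b)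
    (p : (Fin m → ℝ) → ℝ) (hp_nonneg : ∀ x ∈ cube m, 0 ≤ p x) (hp0 : p 0 = 0)
    (hp_mono : MonotoneOn p (cube m)) (hp_lc : LowerContOn (cube m) p) :
    revenue (cube m) (funConvHull (cube m) p) (fun x => ∑ j, vcoef j * x j) b ≥
      revenue (cube m) p (fun x => ∑ j, vcoef j * x j) b :=
  stmt5_general m vcoef b hb p hp_nonneg hp0 hp_mono hp_lc

end
end
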